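/- arXiv:1809.09681 — 2 statements merged into one kernel-verified Lean document; each statement's English description precedes it below -/
import Mathlib

section
/- For every d \geq 2, if \lambda \in \mathbb{C} satisfies p_d(\lambda) = 0, then p_{d+1}(\lambda) \neq 0; that is, consecutive polynomials p_d and p_{d+1} share no common complex root. -/
/-- The multinomial coefficient `(a+b+c)! / (a! b! c!)`. -/
def mult3 (a b c : ℕ) : ℕ := (a + b + c).factorial / (a.factorial * b.factorial * c.factorial)

/-- `P k n z = ∑_{b=0}^{⌊n/2⌋} multinomial(k+n-b; k, b, n-2b) z^b` evaluated at `z : ℂ`. -/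
noncomputable def Pval (k n : ℕ) (z : ℂ) : ℂ :=
  ∑ b ∈ Finset.range (n / 2 + 1), (mult3 k b (n - 2 * b) : ℂ) * z ^ b

/-!
At a common root `λ` of `p_d` and `p_{d+1}`, the relation
`2z(3z+1) p_d' = (3dz+4d+2) p_d - (d+1) p_{d+1}` forces `p_d'(λ) = 0`, because `p_d` vanishes
neither at `0` nor at `-1/3`. So `λ` is a root of `p_d` of multiplicity `m ≥ 2`. But `p_d` solves
`z(4z+1) p'' = 2((2d-3)z+d) p' - d(d-1) p`, and at a root of multiplicity `m ≥ 2` of a solution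
of `a p'' = b p' + c p` we must have `a(λ) = 0` and `(m-1) a'(λ) = b(λ)`. Here this gives
`λ = -1/4` and then `-(m-1) = d + 3/2`, which is absurd.
-/

open Polynomial

namespace Polynomial

variable {R : Type*}

theorem coeff_X_pow_mul_iterate_derivative [Semiring R] (p : R[X]) (m n : ℕ) :
    (X ^ m * derivative^[m] p).coeff n = n.descFactorial m • p.coeff n := by
  rw [coeff_X_pow_mul']
  split_ifs with h
  · rw [coeff_iterate_derivative, Nat.sub_add_cancel h]
  · rw [Nat.descFactorial_eq_zero_iff_lt.mpr (by omega), zero_smul]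

theorem derivative_X_sub_C_pow_succ_mul [CommRing R] (x : R) (k : ℕ) (w : R[X]) :
    derivative ((X - C x) ^ (k + 1) * w)
      = (X - C x) ^ k * (C ((k : R) + 1) * w + (X - C x) * derivative w) := by
  rw [derivative_mul, derivative_X_sub_C_pow, Nat.add_sub_cancel]
  push_cast
  ring

theorem exists_eq_X_sub_C_pow_add_two_mul [CommRing R] {p : R[X]} {x : R} (hp : p ≠ 0)
    (h0 : p.IsRoot x) (h1 : (derivative p).IsRoot x) :
    ∃ s g, p = (X - C x) ^ (s + 2) * g ∧ ¬ g.IsRoot x := by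
  obtain ⟨g, hpg, hg⟩ := exists_eq_pow_rootMultiplicity_mul_and_not_dvd p hp x
  have hm := (one_lt_rootMultiplicity_iff_isRoot hp).mpr ⟨h0, h1⟩
  refine ⟨p.rootMultiplicity x - 2, g, ?_, fun h => hg (dvd_iff_isRoot.mpr h)⟩
  rwa [Nat.sub_add_cancel hm]

/-- `x` is a singular point of the equation, and the multiplicity `s + 2` solves its indicial
equation `m (m - 1) a'(x) = m b(x)`. -/
theorem isRoot_and_indicial_of_ode [CommRing R] [IsDomain R] [CharZero R] {a b c g : R[X]}
    {x : R} {s : ℕ} (hg : ¬ g.IsRoot x)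
    (hode : a * derivative (derivative ((X - C x) ^ (s + 2) * g))
      = b * derivative ((X - C x) ^ (s + 2) * g) + c * ((X - C x) ^ (s + 2) * g)) :
    a.IsRoot x ∧ ((s : R) + 1) * (derivative a).eval x = b.eval x := by
  set w₁ := C ((s : R) + 2) * g + (X - C x) * derivative g
  set w₂ := C ((s : R) + 1) * w₁ + (X - C x) * derivative w₁
  have hd₁ : derivative ((X - C x) ^ (s + 2) * g) = (X - C x) ^ (s + 1) * w₁ := by
    rw [derivative_X_sub_C_pow_succ_mul, Nat.cast_succ, add_assoc, one_add_one_eq_two]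
  have hd₂ : derivative ((X - C x) ^ (s + 1) * w₁) = (X - C x) ^ s * w₂ :=
    derivative_X_sub_C_pow_succ_mul x s w₁
  rw [hd₁, hd₂] at hode
  have hw₂ : w₂.eval x = ((s : R) + 1) * (((s : R) + 2) * g.eval x) := by simp [w₁, w₂]
  have hs₁ : (s : R) + 1 ≠ 0 := by exact_mod_cast s.succ_ne_zero
  have hs₂ : (s : R) + 2 ≠ 0 := by exact_mod_cast (s + 1).succ_ne_zero
  have hw₂x : w₂.eval x ≠ 0 := by rw [hw₂]; exact mul_ne_zero hs₁ (mul_ne_zero hs₂ hg)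
  have hred : a * w₂ = (X - C x) * (b * w₁ + c * ((X - C x) * g)) :=
    mul_left_cancel₀ (pow_ne_zero s (X_sub_C_ne_zero x)) (by linear_combination hode)
  have ha : a.IsRoot x := by
    have := congrArg (eval x) hred
    simp only [eval_mul, eval_sub, eval_X, eval_C, sub_self, zero_mul] at this
    exact (mul_eq_zero.mp this).resolve_right hw₂x
  refine ⟨ha, ?_⟩
  obtain ⟨a₁, rfl⟩ := dvd_iff_isRoot.mpr ha
  have hred₁ : a₁ * w₂ = b * w₁ + c * ((X - C x) * g) :=
    mul_left_cancel₀ (X_sub_C_ne_zero x) (by linear_combination hred)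
  have := congrArg (eval x) hred₁
  simp only [eval_mul, eval_add, eval_sub, eval_X, eval_C, sub_self, zero_mul, hw₂] at this
  simp only [derivative_mul, derivative_sub, derivative_X, derivative_C, sub_zero, one_mul,
    eval_add, eval_mul, eval_sub, eval_X, eval_C, sub_self, zero_mul, add_zero]
  have hw₁ : w₁.eval x = ((s : R) + 2) * g.eval x := by simp [w₁]
  rw [hw₁] at this
  exact mul_right_cancel₀ (mul_ne_zero hs₂ hg) (by linear_combination this)

end Polynomial

theorem mult3_mul_factorial (a b c : ℕ) :
    mult3 a b c * (a.factorial * b.factorial * c.factorial) = (a + b + c).factorial :=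
  Nat.div_mul_cancel <|
    (mul_dvd_mul_right (Nat.factorial_mul_factorial_dvd_factorial_add a b) _).trans
      (Nat.factorial_mul_factorial_dvd_factorial_add (a + b) c)

theorem mult3_ne_zero (a b c : ℕ) : mult3 a b c ≠ 0 := fun h =>
  Nat.factorial_ne_zero (a + b + c) (by rw [← mult3_mul_factorial, h, zero_mul])

theorem cast_mult3 (a b c : ℕ) :
    (mult3 a b c : ℂ) = (a + b + c).factorial / (a.factorial * b.factorial * c.factorial) := by
  rw [eq_div_iff (by simp [Nat.factorial_ne_zero])]
  exact_mod_cast mult3_mul_factorial a b c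

theorem succ_mul_mult3_succ_left (a b c : ℕ) :
    ((a : ℂ) + 1) * mult3 (a + 1) b c = ((a : ℂ) + b + c + 1) * mult3 a b c := by
  rw [cast_mult3, cast_mult3, show a + 1 + b + c = a + b + c + 1 by ring]
  push_cast [Nat.factorial_succ]
  field_simp

theorem succ_mul_mult3_succ_mid (a b c : ℕ) :
    ((b : ℂ) + 1) * mult3 a (b + 1) c = ((a : ℂ) + b + c + 1) * mult3 a b c := by
  rw [cast_mult3, cast_mult3, show a + (b + 1) + c = a + b + c + 1 by ring]
  push_cast [Nat.factorial_succ]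
  field_simp

theorem succ_mul_mult3_succ_right (a b c : ℕ) :
    ((c : ℂ) + 1) * mult3 a b (c + 1) = ((a : ℂ) + b + c + 1) * mult3 a b c := by
  rw [cast_mult3, cast_mult3, show a + b + (c + 1) = a + b + c + 1 by ring]
  push_cast [Nat.factorial_succ]
  field_simp

-- The guard matters: for `2 * j > d` the truncated `d - 2 * j` would give nonzero values.
noncomputable def pCoeff (d j : ℕ) : ℂ := if 2 * j ≤ d then mult3 d j (d - 2 * j) else 0

theorem pCoeff_of_eq {d j a : ℕ} (h : d = a + 2 * j) : pCoeff d j = mult3 d j a := by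
  rw [pCoeff, if_pos (by omega), show d - 2 * j = a by omega]

theorem pCoeff_of_lt {d j : ℕ} (h : d < 2 * j) : pCoeff d j = 0 := if_neg (by omega)

theorem pCoeff_zero_ne_zero (d : ℕ) : pCoeff d 0 ≠ 0 := by
  rw [pCoeff_of_eq (a := d) (by ring)]
  exact_mod_cast mult3_ne_zero d 0 d

theorem pCoeff_succ_recurrence (d n : ℕ) :
    (2 * (d : ℂ) - n) * (n + 1) * pCoeff d (n + 1)
      = ((d : ℂ) - 2 * n) * ((d : ℂ) - 2 * n - 1) * pCoeff d n := by
  rcases lt_or_ge d (2 * (n + 1)) with h | h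
  · rw [pCoeff_of_lt h]
    rcases (by omega : d = 2 * n ∨ d = 2 * n + 1 ∨ d < 2 * n) with rfl | rfl | h'
    · push_cast; ring
    · push_cast; ring
    · rw [pCoeff_of_lt h']; ring
  · obtain ⟨e, rfl⟩ : ∃ e, d = e + 2 * n + 2 := ⟨d - 2 * n - 2, by omega⟩
    rw [pCoeff_of_eq (a := e) (by ring), pCoeff_of_eq (a := e + 1 + 1) (by ring)]
    have h₁ := succ_mul_mult3_succ_mid (e + 2 * n + 2) n e
    have h₂ := succ_mul_mult3_succ_right (e + 2 * n + 2) n e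
    have h₃ := succ_mul_mult3_succ_right (e + 2 * n + 2) n (e + 1)
    push_cast at h₁ h₂ h₃ ⊢
    linear_combination (2 * ((e : ℂ) + 2 * n + 2) - n) * h₁ - ((e : ℂ) + 1) * h₃
      - (2 * (e : ℂ) + 3 * n + 4) * h₂

theorem pCoeff_succ_zero (d : ℕ) :
    ((d : ℂ) + 1) * pCoeff (d + 1) 0 = (4 * d + 2) * pCoeff d 0 := by
  rw [pCoeff_of_eq (a := d + 1) (by ring), pCoeff_of_eq (a := d) (by ring)]
  have h₁ := succ_mul_mult3_succ_left d 0 (d + 1)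
  have h₂ := succ_mul_mult3_succ_right d 0 d
  push_cast at h₁ h₂ ⊢
  linear_combination h₁ + 2 * h₂

theorem pCoeff_succ_succ (d n : ℕ) :
    ((d : ℂ) + 1) * pCoeff (d + 1) (n + 1)
      = 3 * ((d : ℂ) - 2 * n) * pCoeff d n + (4 * (d : ℂ) - 2 * n) * pCoeff d (n + 1) := by
  rcases lt_or_ge d (2 * (n + 1)) with h | h
  · rw [pCoeff_of_lt h]
    rcases (by omega : d = 2 * n ∨ d = 2 * n + 1 ∨ d < 2 * n) with rfl | rfl | h'
    · rw [pCoeff_of_lt (by omega)]; push_cast; ring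
    · rw [pCoeff_of_eq (a := 0) (by ring), pCoeff_of_eq (a := 1) (by ring)]
      have h₁ := succ_mul_mult3_succ_left (2 * n + 1) (n + 1) 0
      have h₂ := succ_mul_mult3_succ_mid (2 * n + 1) n 0
      have h₃ := succ_mul_mult3_succ_right (2 * n + 1) n 0
      push_cast at h₁ h₂ h₃ ⊢
      linear_combination h₁ + 3 * h₂ - 3 * h₃
    · rw [pCoeff_of_lt h', pCoeff_of_lt (by omega)]; ring
  · obtain ⟨f, rfl⟩ : ∃ f, d = f + 2 * n + 2 := ⟨d - 2 * n - 2, by omega⟩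
    rw [pCoeff_of_eq (a := f + 1) (by ring), pCoeff_of_eq (a := f + 1 + 1) (by ring),
      pCoeff_of_eq (a := f) (by ring)]
    have hX := succ_mul_mult3_succ_left (f + 2 * n + 2) (n + 1) (f + 1)
    have hY₁ := succ_mul_mult3_succ_mid (f + 2 * n + 2) n (f + 1)
    have hY₂ := succ_mul_mult3_succ_right (f + 2 * n + 2) n (f + 1)
    have hZ := succ_mul_mult3_succ_right (f + 2 * n + 2) (n + 1) f
    push_cast at hX hY₁ hY₂ hZ ⊢
    linear_combination hX + 3 * (hY₁ - hY₂) + 2 * hZ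

noncomputable def pPoly (d : ℕ) : ℂ[X] :=
  ∑ j ∈ Finset.range (d / 2 + 1), C (mult3 d j (d - 2 * j) : ℂ) * X ^ j

theorem coeff_pPoly (d n : ℕ) : (pPoly d).coeff n = pCoeff d n := by
  rw [pPoly, finsetSum_coeff]
  simp only [coeff_C_mul, coeff_X_pow, mul_ite, mul_one, mul_zero]
  rw [Finset.sum_ite_eq, pCoeff]
  exact if_congr (by rw [Finset.mem_range]; omega) rfl rfl

theorem eval_pPoly (d : ℕ) (z : ℂ) : (pPoly d).eval z = Pval d d z := by
  simp [pPoly, Pval, eval_finsetSum]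

theorem not_isRoot_pPoly_zero (d : ℕ) : ¬ (pPoly d).IsRoot 0 := by
  rw [IsRoot, ← coeff_zero_eq_eval_zero, coeff_pPoly]
  exact pCoeff_zero_ne_zero d

theorem pPoly_ne_zero (d : ℕ) : pPoly d ≠ 0 := fun h =>
  not_isRoot_pPoly_zero d (by simp [h])

theorem pPoly_succ_relation (d : ℕ) :
    C 2 * X * (C 3 * X + 1) * derivative (pPoly d)
      = (C (3 * (d : ℂ)) * X + C (4 * (d : ℂ) + 2)) * pPoly d
        - C ((d : ℂ) + 1) * pPoly (d + 1) := by
  have key : X * (C 2 * (C 3 * (X ^ 1 * derivative^[1] (pPoly d))) - C (3 * (d : ℂ)) * pPoly d)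
      + C 2 * (X ^ 1 * derivative^[1] (pPoly d))
      = C (4 * (d : ℂ) + 2) * pPoly d - C ((d : ℂ) + 1) * pPoly (d + 1) := by
    ext (_ | n)
    · simp only [coeff_add, coeff_sub, coeff_C_mul, coeff_X_mul_zero,
        coeff_X_pow_mul_iterate_derivative, coeff_pPoly, Nat.descFactorial_one, nsmul_eq_mul]
      push_cast
      linear_combination pCoeff_succ_zero d
    · simp only [coeff_add, coeff_sub, coeff_C_mul, coeff_X_mul,
        coeff_X_pow_mul_iterate_derivative, coeff_pPoly, Nat.descFactorial_one, nsmul_eq_mul]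
      push_cast
      linear_combination pCoeff_succ_succ d n
  simp only [pow_one, Function.iterate_one] at key
  linear_combination key

theorem pPoly_ode (d : ℕ) :
    (C 4 * X ^ 2 + X) * derivative (derivative (pPoly d))
      = (C (2 * (2 * (d : ℂ) - 3)) * X + C (2 * (d : ℂ))) * derivative (pPoly d)
        + C (-(d : ℂ) * (d - 1)) * pPoly d := by
  have key : C 4 * (X ^ 2 * derivative^[2] (pPoly d))
      + X ^ 1 * derivative^[1] (derivative (pPoly d))
      = C (2 * (2 * (d : ℂ) - 3)) * (X ^ 1 * derivative^[1] (pPoly d))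
        + C (2 * (d : ℂ)) * derivative (pPoly d) + C (-(d : ℂ) * (d - 1)) * pPoly d := by
    ext n
    simp only [coeff_add, coeff_C_mul, coeff_X_pow_mul_iterate_derivative, coeff_derivative,
      coeff_pPoly, nsmul_eq_mul, Nat.cast_descFactorial_two, Nat.descFactorial_one]
    linear_combination -(pCoeff_succ_recurrence d n)
  simp only [pow_one, Function.iterate_succ, Function.comp_apply, Function.iterate_zero, id]
    at key
  linear_combination key

theorem not_isRoot_pPoly_neg_one_third (d : ℕ) : ¬ (pPoly d).IsRoot (-1 / 3) := by
  induction d with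
  | zero => simp [pPoly, mult3]
  | succ d ih =>
    intro hroot
    have h := congrArg (eval (-1 / 3 : ℂ)) (pPoly_succ_relation d)
    simp only [eval_mul, eval_sub, eval_add, eval_C, eval_X, eval_one, hroot.eq_zero] at h
    have h3 : ((3 * d + 2 : ℕ) : ℂ) ≠ 0 := Nat.cast_ne_zero.mpr (by omega)
    have h' : ((3 * d + 2 : ℕ) : ℂ) * (pPoly d).eval (-1 / 3) = 0 := by
      push_cast; linear_combination -h
    exact ih ((mul_eq_zero.mp h').resolve_left h3)

theorem isRoot_derivative_pPoly {d : ℕ} {z : ℂ} (h₀ : (pPoly d).IsRoot z)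
    (h₁ : (pPoly (d + 1)).IsRoot z) : (derivative (pPoly d)).IsRoot z := by
  have hz₀ : z ≠ 0 := by rintro rfl; exact not_isRoot_pPoly_zero d h₀
  have hz₃ : 3 * z + 1 ≠ 0 := fun h =>
    not_isRoot_pPoly_neg_one_third d (by rwa [show z = -1 / 3 by linear_combination h / 3] at h₀)
  have h := congrArg (eval z) (pPoly_succ_relation d)
  simp only [eval_mul, eval_sub, eval_add, eval_C, eval_X, eval_one, h₀.eq_zero, h₁.eq_zero]
    at h
  have h' : (2 * z * (3 * z + 1)) * (derivative (pPoly d)).eval z = 0 := by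
    linear_combination h
  exact (mul_eq_zero.mp h').resolve_left (mul_ne_zero (mul_ne_zero two_ne_zero hz₀) hz₃)

theorem stmt5_general (d : ℕ) (lam : ℂ) (h0 : Pval d d lam = 0) :
    Pval (d + 1) (d + 1) lam ≠ 0 := by
  intro h1
  rw [← eval_pPoly] at h0 h1
  obtain ⟨s, g, hp, hg⟩ :=
    exists_eq_X_sub_C_pow_add_two_mul (pPoly_ne_zero d) h0 (isRoot_derivative_pPoly h0 h1)
  have hode := pPoly_ode d
  rw [hp] at hode
  obtain ⟨hsing, hind⟩ := isRoot_and_indicial_of_ode hg hode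
  have hlam : lam = -1 / 4 := by
    simp only [IsRoot, eval_add, eval_mul, eval_C, eval_pow, eval_X] at hsing
    have hz₀ : lam ≠ 0 := by rintro rfl; exact not_isRoot_pPoly_zero d h0
    have : lam * (4 * lam + 1) = 0 := by linear_combination hsing
    linear_combination (mul_eq_zero.mp this).resolve_left hz₀ / 4
  norm_num [hlam] at hind
  have : ((2 * s + 2 * d + 5 : ℕ) : ℂ) = 0 := by push_cast; linear_combination -2 * hind
  exact absurd (Nat.cast_eq_zero.mp this) (by omega)

/-- Consecutive polynomials `p_d` and `p_{d+1}` share no common complex root. -/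
theorem stmt5 (d : ℕ) (hd : 2 ≤ d) (lam : ℂ) (h0 : Pval d d lam = 0) :
    Pval (d + 1) (d + 1) lam ≠ 0 :=
  stmt5_general d lam h0
end

section
/- For d \geq 2, as an identity of rational functions in z over \mathbb{Q}(d) (valid for each fixed integer d \geq 2), the determinant D = P_{d+1,d-1} P_{d+2,d-1} - P_{d+1,d-2} P_{d+2,d} satisfies D = \frac{(d+1) P_{d+1,d+1}^2}{2(d+2) z (1+3z)} - \frac{3d(3d+2)(3d+4) z P_{d,d}^2}{2(d+1)^2 (d+2)(1+3z)(1+4z)} - \frac{(2 + 8z + d(2d+3)(2+9z)) P_{d,d} P_{d+1,d+1}}{2(d+1)(d+2) z (1+3z)(1+4z)}. -/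
/-!
`P_{k,n}(z)` is the coefficient of `x^k y^n` in `F = 1 / (1 - x - y - z y^2)`. Comparing
coefficients in `F = 1 + (x + y + z y^2) F` gives the Pascal rule
`P_{k+1,n+2} = P_{k,n+2} + P_{k+1,n+1} + z P_{k+1,n}`, and `∂F/∂y = (1 + 2 z y) ∂F/∂x` gives
`(n+2) P_{k,n+2} = (k+1) (P_{k+1,n+1} + 2 z P_{k+1,n})`. Together they make row `d+1` satisfy a
three-term recurrence in `n` and determine row `d+2` from row `d+1`, so that `P_{d,d}`,
`P_{d+1,d+1}` and the four entries of `D` are all linear in `P_{d+1,d-2}` and `P_{d+1,d-1}`.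
The claim thereby becomes an identity between quadratic forms in these two values.
-/

open Polynomial Finset

/-- `trinomialCoeff k s b = (k + s)! / (k! b! (s - b)!)`. -/
def trinomialCoeff (k s b : ℕ) : ℕ := (k + s).choose k * s.choose b

lemma trinomialCoeff_eq_zero {k s b : ℕ} (h : s < b) : trinomialCoeff k s b = 0 := by
  rw [trinomialCoeff, Nat.choose_eq_zero_of_lt h, mul_zero]

lemma trinomialCoeff_succ_succ (k s b : ℕ) :
    trinomialCoeff (k + 1) (s + 1) b =
      trinomialCoeff k (s + 1) b + (k + 1 + s).choose (k + 1) * (s + 1).choose b := by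
  rw [trinomialCoeff, trinomialCoeff, show k + 1 + (s + 1) = k + (s + 1) + 1 by omega,
    Nat.choose_succ_succ, show k + (s + 1) = k + 1 + s by omega, add_mul]

lemma trinomialCoeff_pascal (k s b : ℕ) :
    trinomialCoeff (k + 1) (s + 1) (b + 1) = trinomialCoeff k (s + 1) (b + 1) +
      trinomialCoeff (k + 1) s (b + 1) + trinomialCoeff (k + 1) s b := by
  rw [trinomialCoeff_succ_succ, Nat.choose_succ_succ]
  simp only [trinomialCoeff]
  ring

lemma add_one_mul_choose_add_one_add (k s : ℕ) :
    (k + 1) * (k + 1 + s).choose (k + 1) = (s + 1) * (k + 1 + s).choose k := by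
  have h := Nat.choose_succ_right_eq (k + 1 + s) k
  rw [show k + 1 + s - k = s + 1 by omega] at h
  linarith

lemma trinomialCoeff_shift (k s b : ℕ) :
    (s + b + 2) * trinomialCoeff k (s + 1) (b + 1) =
      (k + 1) * (trinomialCoeff (k + 1) s (b + 1) + 2 * trinomialCoeff (k + 1) s b) := by
  have h₁ := add_one_mul_choose_add_one_add k s
  have h₂ := Nat.add_one_mul_choose_eq s b
  have h₃ := Nat.choose_succ_succ s b
  simp only [trinomialCoeff]
  rw [show k + (s + 1) = k + 1 + s by omega]
  zify at h₁ h₂ h₃ ⊢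
  linear_combination ((k + 1 + s).choose k : ℤ) * ((s + 1) * h₃ - h₂) -
    ((s.choose (b + 1) : ℤ) + 2 * s.choose b) * h₁

noncomputable def Ppoly (k n : ℕ) : ℕ[X] :=
  ∑ b ∈ range (n + 1), C (trinomialCoeff k (n - b) b) * X ^ b

lemma coeff_Ppoly (k n b : ℕ) : (Ppoly k n).coeff b = trinomialCoeff k (n - b) b := by
  simp only [Ppoly, finsetSum_coeff, coeff_C_mul_X_pow, sum_ite_eq, mem_range]
  split_ifs with h
  · rfl
  · rw [trinomialCoeff_eq_zero (by omega)]

lemma coeff_Ppoly_eq_zero {k n b : ℕ} (h : n < 2 * b) : (Ppoly k n).coeff b = 0 := by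
  rw [coeff_Ppoly, trinomialCoeff_eq_zero (by omega)]

lemma Ppoly_pascal (k n : ℕ) :
    Ppoly (k + 1) (n + 2) = Ppoly k (n + 2) + Ppoly (k + 1) (n + 1) + X * Ppoly (k + 1) n := by
  ext (_ | b)
  · simpa [coeff_Ppoly, trinomialCoeff] using trinomialCoeff_succ_succ k (n + 1) 0
  simp only [coeff_add, coeff_X_mul]
  by_cases h : n < 2 * b
  · simp [coeff_Ppoly_eq_zero, h, show n + 1 < 2 * (b + 1) by omega,
      show n + 2 < 2 * (b + 1) by omega]
  · simp only [coeff_Ppoly]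
    rw [show n + 2 - (b + 1) = n - b + 1 by omega, show n + 1 - (b + 1) = n - b by omega]
    exact trinomialCoeff_pascal k (n - b) b

lemma Ppoly_shift (k n : ℕ) :
    (n + 2) • Ppoly k (n + 2) = (k + 1) • (Ppoly (k + 1) (n + 1) + 2 • (X * Ppoly (k + 1) n)) := by
  ext (_ | b)
  · simp only [coeff_smul, coeff_add, coeff_X_mul_zero, coeff_Ppoly, trinomialCoeff, smul_eq_mul]
    rw [show k + (n + 2 - 0) = k + 1 + (n + 1) by omega]
    simpa using (add_one_mul_choose_add_one_add k (n + 1)).symm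
  simp only [coeff_smul, coeff_add, coeff_X_mul, smul_eq_mul]
  by_cases h : n < 2 * b
  · simp [coeff_Ppoly_eq_zero, h, show n + 1 < 2 * (b + 1) by omega,
      show n + 2 < 2 * (b + 1) by omega]
  · simp only [coeff_Ppoly]
    rw [show n + 2 - (b + 1) = n - b + 1 by omega, show n + 1 - (b + 1) = n - b by omega]
    convert trinomialCoeff_shift k (n - b) b using 2
    omega

lemma mult3_eq_trinomialCoeff (a b c : ℕ) : mult3 a b c = trinomialCoeff a (b + c) b := by
  have h₁ := Nat.add_choose_mul_factorial_mul_factorial a (b + c)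
  have h₂ := Nat.add_choose_mul_factorial_mul_factorial b c
  rw [← Nat.choose_symm_add] at h₁ h₂
  refine Nat.div_eq_of_eq_mul_left (by positivity) ?_
  rw [trinomialCoeff, add_assoc, ← h₁, ← h₂]
  ring

lemma Pval_eq_aeval (k n : ℕ) (z : ℂ) : Pval k n z = aeval z (Ppoly k n) := calc
  Pval k n z = ∑ b ∈ range (n / 2 + 1), (trinomialCoeff k (n - b) b : ℂ) * z ^ b :=
    sum_congr rfl fun b hb => by
      rw [mult3_eq_trinomialCoeff, show b + (n - 2 * b) = n - b by grind]
  _ = ∑ b ∈ range (n + 1), (trinomialCoeff k (n - b) b : ℂ) * z ^ b :=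
    sum_subset (range_subset_range.2 (by omega)) fun b _ hb => by
      rw [trinomialCoeff_eq_zero (by grind), Nat.cast_zero, zero_mul]
  _ = aeval z (Ppoly k n) := by simp [Ppoly]

section

variable (k n : ℕ) (z : ℂ)

lemma Pval_pascal :
    Pval (k + 1) (n + 2) z = Pval k (n + 2) z + Pval (k + 1) (n + 1) z + z * Pval (k + 1) n z := by
  simp only [Pval_eq_aeval, Ppoly_pascal, map_add, map_mul, aeval_X]

lemma Pval_shift :
    ((n : ℂ) + 2) * Pval k (n + 2) z =
      ((k : ℂ) + 1) * (Pval (k + 1) (n + 1) z + 2 * z * Pval (k + 1) n z) := by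
  have h := congrArg (aeval z) (Ppoly_shift k n)
  simp only [nsmul_eq_mul, map_add, map_mul, map_natCast, aeval_X] at h
  push_cast at h
  simp only [Pval_eq_aeval]
  linear_combination h

lemma Pval_row_recurrence :
    ((n : ℂ) + 2) * Pval (k + 1) (n + 2) z =
      ((n : ℂ) + k + 3) * Pval (k + 1) (n + 1) z + ((n : ℂ) + 2 * k + 4) * z * Pval (k + 1) n z := by
  linear_combination Pval_shift k n z + ((n : ℂ) + 2) * Pval_pascal k n z

lemma Pval_pascal_zfree :
    2 * ((k : ℂ) + 1) * Pval (k + 1) (n + 2) z =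
      (2 * (k : ℂ) + n + 4) * Pval k (n + 2) z + ((k : ℂ) + 1) * Pval (k + 1) (n + 1) z := by
  linear_combination 2 * ((k : ℂ) + 1) * Pval_pascal k n z - Pval_shift k n z

lemma Pval_succ_of_row :
    ((k : ℂ) + 1) * (1 + 4 * z) * Pval (k + 1) (n + 1) z =
      2 * ((n : ℂ) + 3) * Pval k (n + 3) z - (2 * (k : ℂ) + n + 4) * Pval k (n + 2) z := by
  have h := Pval_shift k (n + 1) z
  simp only [Nat.add_assoc, Nat.reduceAdd, Nat.cast_add, Nat.cast_one] at h
  linear_combination -2 * h - Pval_pascal_zfree k n z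

end

lemma det_eq_of_recurrences {K : Type*} [Field K] [CharZero K] {d : ℕ}
    {z x₀ x₁ x₂ a b y₁ y₂ : K}
    (hd : d ≠ 0) (hz : z ≠ 0) (hz₃ : 1 + 3 * z ≠ 0) (hz₄ : 1 + 4 * z ≠ 0)
    (ha : (d : K) * a = (d + 1) * (x₁ + 2 * z * x₀))
    (hx₂ : (d : K) * x₂ = (2 * d + 1) * x₁ + (3 * d + 2) * z * x₀)
    (hb : ((d : K) + 1) * b = (2 * d + 2) * x₂ + (3 * d + 3) * z * x₁)
    (hy₁ : ((d : K) + 2) * (1 + 4 * z) * y₁ = 2 * (d + 1) * b - (3 * d + 4) * x₂)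
    (hy₂ : 2 * ((d : K) + 2) * y₂ = (3 * d + 4) * x₂ + (d + 2) * y₁) :
    x₁ * y₁ - x₀ * y₂ =
      ((d : K) + 1) * b ^ 2 / (2 * ((d : K) + 2) * z * (1 + 3 * z))
        - 3 * (d : K) * (3 * (d : K) + 2) * (3 * (d : K) + 4) * z * a ^ 2 /
            (2 * ((d : K) + 1) ^ 2 * ((d : K) + 2) * (1 + 3 * z) * (1 + 4 * z))
        - (2 + 8 * z + (d : K) * (2 * (d : K) + 3) * (2 + 9 * z)) * a * b /
            (2 * ((d : K) + 1) * ((d : K) + 2) * z * (1 + 3 * z) * (1 + 4 * z)) := by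
  have hd₀ : (d : K) ≠ 0 := Nat.cast_ne_zero.2 hd
  have hd₁ : (d : K) + 1 ≠ 0 := Nat.cast_add_one_ne_zero d
  have hd₂ : (d : K) + 2 ≠ 0 := by exact_mod_cast (by omega : d + 2 ≠ 0)
  obtain rfl : y₂ = ((3 * d + 4) * x₂ + (d + 2) * y₁) / (2 * (d + 2)) :=
    eq_div_of_mul_eq (mul_ne_zero two_ne_zero hd₂) (by linear_combination hy₂)
  obtain rfl : y₁ = (2 * (d + 1) * b - (3 * d + 4) * x₂) / ((d + 2) * (1 + 4 * z)) :=
    eq_div_of_mul_eq (mul_ne_zero hd₂ hz₄) (by linear_combination hy₁)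
  obtain rfl : b = ((2 * d + 2) * x₂ + (3 * d + 3) * z * x₁) / (d + 1) :=
    eq_div_of_mul_eq hd₁ (by linear_combination hb)
  obtain rfl : x₂ = ((2 * d + 1) * x₁ + (3 * d + 2) * z * x₀) / d :=
    eq_div_of_mul_eq hd₀ (by linear_combination hx₂)
  obtain rfl : a = (d + 1) * (x₁ + 2 * z * x₀) / d :=
    eq_div_of_mul_eq hd₀ (by linear_combination ha)
  -- `field_simp` meets this denominator only in its normal form `1 + z * 4`
  have hz₄' : 1 + z * 4 ≠ 0 := by rwa [mul_comm]
  field_simp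
  ring

/-- The identity expressing `D = P_{d+1,d-1} P_{d+2,d-1} - P_{d+1,d-2} P_{d+2,d}` in terms of
`P_{d,d}` and `P_{d+1,d+1}`, as an identity of rational functions (stated for all `z` avoiding
the poles). -/
theorem stmt12 (d : ℕ) (hd : 2 ≤ d) (z : ℂ) (hz0 : z ≠ 0)
    (hz3 : 1 + 3 * z ≠ 0) (hz4 : 1 + 4 * z ≠ 0) :
    Pval (d+1) (d-1) z * Pval (d+2) (d-1) z - Pval (d+1) (d-2) z * Pval (d+2) d z =
      ((d : ℂ) + 1) * Pval (d+1) (d+1) z ^ 2 / (2 * ((d : ℂ) + 2) * z * (1 + 3 * z))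
        - 3 * (d : ℂ) * (3 * (d : ℂ) + 2) * (3 * (d : ℂ) + 4) * z * Pval d d z ^ 2 /
            (2 * ((d : ℂ) + 1) ^ 2 * ((d : ℂ) + 2) * (1 + 3 * z) * (1 + 4 * z))
        - (2 + 8 * z + (d : ℂ) * (2 * (d : ℂ) + 3) * (2 + 9 * z)) *
              Pval d d z * Pval (d+1) (d+1) z /
            (2 * ((d : ℂ) + 1) * ((d : ℂ) + 2) * z * (1 + 3 * z) * (1 + 4 * z)) := by
  obtain ⟨m, rfl⟩ := Nat.exists_eq_add_of_le' hd
  have ha := Pval_shift (m + 2) m z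
  have hx₂ := Pval_row_recurrence (m + 2) m z
  have hb := Pval_row_recurrence (m + 2) (m + 1) z
  have hy₁ := Pval_succ_of_row (m + 3) m z
  have hy₂ := Pval_pascal_zfree (m + 3) m z
  simp only [Nat.add_assoc, Nat.reduceAdd, Nat.reduceSubDiff, Nat.add_sub_cancel]
    at ha hx₂ hb hy₁ hy₂ ⊢
  push_cast at ha hx₂ hb hy₁ hy₂
  refine det_eq_of_recurrences (x₂ := Pval (m + 3) (m + 2) z) (by omega) hz0 hz3 hz4
    ?_ ?_ ?_ ?_ ?_ <;> push_cast
  · linear_combination ha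
  · linear_combination hx₂
  · linear_combination hb
  · linear_combination hy₁
  · linear_combination hy₂
end
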